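/- For every r ≥ 1, the odd wheel W_{2r+3} (an odd cycle on 2r+3 vertices plus a dominating vertex) is a minimal forbidden induced subgraph for Ω_{2r} but not for Υ_{2r}; in particular Δ(W_{2r+3}) = 2r+3 = ω(W_{2r+3}) + 2r while χ(W_{2r+3}) = 4. -/

import Mathlib

open SimpleGraph

attribute [local instance] Classical.propDecidable

set_option linter.unnecessarySeqFocus false

/-- `G ∈ Υ_k`: every nonempty induced subgraph `H` satisfies `Δ(H) + 1 ≤ χ(H) + k`,
i.e. `Δ(H) ≤ χ(H) + k - 1`. -/
def UpsilonMem (k : ℕ) {V : Type*} [Fintype V] (G : SimpleGraph V) : Prop :=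
  ∀ s : Finset V, s.Nonempty →
    ((G.induce (s : Set V)).maxDegree + 1 : ℕ∞) ≤
      (G.induce (s : Set V)).chromaticNumber + (k : ℕ∞)

/-- `G ∈ Ω_k`: every nonempty induced subgraph `H` satisfies `Δ(H) + 1 ≤ ω(H) + k`. -/
def OmegaMem (k : ℕ) {V : Type*} [Fintype V] (G : SimpleGraph V) : Prop :=
  ∀ s : Finset V, s.Nonempty →
    (G.induce (s : Set V)).maxDegree + 1 ≤ (G.induce (s : Set V)).cliqueNum + k

/-- `G` is a minimal forbidden induced subgraph for `Υ_k`. -/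
def MinForbUpsilon (k : ℕ) {V : Type*} [Fintype V] (G : SimpleGraph V) : Prop :=
  ¬ UpsilonMem k G ∧
    ∀ s : Finset V, s ≠ Finset.univ → UpsilonMem k (G.induce (s : Set V))

/-- `G` is a minimal forbidden induced subgraph for `Ω_k`. -/
def MinForbOmega (k : ℕ) {V : Type*} [Fintype V] (G : SimpleGraph V) : Prop :=
  ¬ OmegaMem k G ∧
    ∀ s : Finset V, s ≠ Finset.univ → OmegaMem k (G.induce (s : Set V))

/-- `v` is a dominating vertex of `G`. -/
def IsDominatingVertex {V : Type*} (G : SimpleGraph V) (v : V) : Prop :=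
  ∀ w, w ≠ v → G.Adj v w

/-- In every optimal proper coloring of `G`, every used color class has at least 2 vertices. -/
def AllColorClassesBig {V : Type*} [Fintype V] (G : SimpleGraph V) : Prop :=
  ∀ (n : ℕ) (C : G.Coloring (Fin n)), (n : ℕ∞) = G.chromaticNumber →
    ∀ c : Fin n, (∃ u, C u = c) → 2 ≤ Fintype.card {u // C u = c}

/-- `G` is a perfect graph: clique number equals chromatic number for every induced subgraph. -/
def IsPerfect {V : Type*} [Fintype V] (G : SimpleGraph V) : Prop :=
  ∀ s : Finset V,
    (((G.induce (s : Set V)).cliqueNum : ℕ∞)) = (G.induce (s : Set V)).chromaticNumber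

/-- Add a dominating vertex to `G`. -/
def cone {V : Type*} (G : SimpleGraph V) : SimpleGraph (Option V) where
  Adj a b := match a, b with
    | some a, some b => G.Adj a b
    | some _, none => True
    | none, some _ => True
    | none, none => False
  symm := ⟨by rintro (_|a) (_|b) h <;> simp_all <;> exact h.symm⟩
  loopless := ⟨by rintro (_|a) h <;> simp_all⟩

/-- The claw `K_{1,3}`. -/
def claw : SimpleGraph (Fin 1 ⊕ Fin 3) := completeBipartiteGraph (Fin 1) (Fin 3)

/-- The gem: `P₄` plus a dominating vertex. -/
def gem : SimpleGraph (Option (Fin 4)) := cone (pathGraph 4)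

/-- The wheel `W₄`: `C₄` plus a dominating vertex. -/
def wheel4 : SimpleGraph (Option (Fin 4)) := cone (cycleGraph 4)

/-- The butterfly: two triangles sharing exactly one vertex. -/
def butterfly : SimpleGraph (Fin 5) :=
  SimpleGraph.fromRel (fun a b =>
    (a, b) ∈ [((0:Fin 5), (1:Fin 5)), (0,2), (1,2), (0,3), (0,4), (3,4)])

/-- `G` is a disjoint union of complete graphs. -/
def IsUnionOfCliques {V : Type*} (G : SimpleGraph V) : Prop :=
  ∀ a b c, G.Adj a b → G.Adj b c → a ≠ c → G.Adj a c

/-- `G` is neighborhood perfect: the neighborhood of every vertex induces a perfect graph. -/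
def NbhdPerfect {V : Type*} [Fintype V] (G : SimpleGraph V) : Prop :=
  ∀ v : V, IsPerfect (G.induce (G.neighborSet v))


/-!
Write `W = cone C` with `C` the cycle on `2r + 3 ≥ 5` vertices. As `C` is triangle-free and odd,
`ω(W) = ω(C) + 1 = 3` and `χ(W) = χ(C) + 1 = 4`, while the hub has degree `2r + 3`; so `W` itself
breaks the `Ω_{2r}` bound and meets the `Υ_{2r}` bound with equality.

For a proper induced subgraph `H`: if `H` misses the hub it is a subgraph of `C`, so `Δ(H) ≤ 2`.
Otherwise the hub dominates `H`, so `Δ(H) + 1 = |H| ≤ 2r + 3`; then either two rim vertices of `H`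
are adjacent, giving a triangle and `ω(H) ≥ 3`, or the rim of `H` is an independent set of the odd
cycle, hence has at most `r + 1` vertices. In every case `Δ(H) + 1 ≤ ω(H) + 2r ≤ χ(H) + 2r`.
-/

namespace SimpleGraph

variable {V U : Type*}

section Cycle

theorem cycleGraph_cliqueFree_three {n : ℕ} (hn : 4 ≤ n) : (cycleGraph n).CliqueFree 3 := by
  obtain ⟨m, rfl⟩ : ∃ m, n = m + 4 := ⟨n - 4, by omega⟩
  intro s hs
  obtain ⟨a, b, c, hab, hac, hbc, rfl⟩ := is3Clique_iff.1 hs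
  have hne := hbc.ne
  simp only [cycleGraph_adj, sub_eq_iff_eq_add', Fin.ext_iff, Fin.val_add_one, Fin.val_last]
    at hab hac hbc hne
  split_ifs at hab hac hbc <;> omega

theorem two_mul_card_le_of_isIndepSet_cycleGraph {n : ℕ} (hn : 2 ≤ n) {s : Finset (Fin n)}
    (hs : (cycleGraph n).IsIndepSet s) : 2 * s.card ≤ n := by
  obtain ⟨m, rfl⟩ : ∃ m, n = m + 2 := ⟨n - 2, by omega⟩
  by_contra! h
  obtain ⟨j, hj⟩ : (s ∩ s.map (Equiv.addRight 1).toEmbedding).Nonempty :=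
    Finset.inter_nonempty_of_card_lt_card_add_card (Finset.subset_univ _) (Finset.subset_univ _)
      (by simpa [two_mul] using h)
  rw [Finset.mem_inter, Finset.mem_map] at hj
  obtain ⟨hj, i, hi, rfl⟩ := hj
  have hadj : (cycleGraph (m + 2)).Adj ((Equiv.addRight 1) i) i := by
    simp [cycleGraph_adj]
  exact hs hj hi hadj.ne hadj

theorem maxDegree_cycleGraph_le (n : ℕ) : (cycleGraph n).maxDegree ≤ 2 := by
  refine maxDegree_le_of_forall_degree_le _ _ fun v ↦ ?_
  match n with
  | 0 => exact v.elim0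
  | 1 => simp [degree]
  | n + 2 => exact cycleGraph_degree_two_le.trans_le Finset.card_le_two

end Cycle

theorem IsNClique.le_cliqueNum [Finite V] {G : SimpleGraph V} {n : ℕ} {s : Finset V}
    (h : G.IsNClique n s) : n ≤ G.cliqueNum :=
  h.card_eq ▸ h.isClique.card_le_cliqueNum

theorem cliqueNum_lt_of_cliqueFree {G : SimpleGraph V} {n : ℕ} (h : G.CliqueFree n) :
    G.cliqueNum < n := by
  by_contra! hn
  obtain ⟨s, hs⟩ := G.exists_isNClique_cliqueNum
  exact h.mono hn s hs

theorem cliqueNum_cycleGraph {n : ℕ} (hn : 4 ≤ n) : (cycleGraph n).cliqueNum = 2 := by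
  obtain ⟨m, rfl⟩ : ∃ m, n = m + 2 := ⟨n - 2, by omega⟩
  refine le_antisymm (Nat.le_of_lt_succ (cliqueNum_lt_of_cliqueFree
    (cycleGraph_cliqueFree_three hn))) (IsNClique.le_cliqueNum (s := {0, 1}) ?_)
  refine ⟨?_, Finset.card_pair zero_ne_one⟩
  rw [Finset.coe_pair, isClique_pair]
  simp [cycleGraph_adj]

theorem IsUniversal.maxDegree_add_one [Fintype V] {G : SimpleGraph V} [DecidableRel G.Adj]
    {v : V} (hv : G.IsUniversal v) : G.maxDegree + 1 = Fintype.card V := by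
  have : Nonempty V := ⟨v⟩
  have hdeg := (G.degree_eq_card_sub_one v).2 hv
  have := G.degree_le_maxDegree v
  have := G.maxDegree_lt_card_verts
  omega

theorem IsUniversal.comap {G : SimpleGraph V} {H : SimpleGraph U} (f : H ↪g G) {u : U}
    (hu : G.IsUniversal (f u)) : H.IsUniversal u :=
  fun _ hw ↦ f.map_adj_iff.1 (hu (f.injective.ne hw))

theorem not_omegaMem_of_cliqueNum_add_lt [Fintype V] [Nonempty V] {G : SimpleGraph V} {k : ℕ}
    (h : G.cliqueNum + k < G.maxDegree + 1) : ¬OmegaMem k G := by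
  intro hG
  have hsurj : Function.Surjective (Embedding.induce (G := G) ↑(Finset.univ : Finset V)) :=
    fun v ↦ ⟨⟨v, Finset.mem_coe.2 (Finset.mem_univ v)⟩, rfl⟩
  have := hG Finset.univ Finset.univ_nonempty
  rw [Iso.maxDegree_eq (RelIso.ofSurjective _ hsurj)] at this
  have := cliqueNum_induce_le (G := G) (Finset.univ : Finset V)
  omega

section Cone

variable {G : SimpleGraph V} {H : SimpleGraph U}

@[simp]
theorem cone_adj_some_some {a b : V} : (cone G).Adj (some a) (some b) ↔ G.Adj a b := Iff.rfl

theorem isUniversal_cone_none : (cone G).IsUniversal none := by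
  rintro (_ | w) h
  · exact absurd rfl h
  · trivial

theorem maxDegree_cone [Fintype V] [DecidableRel (cone G).Adj] :
    (cone G).maxDegree = Fintype.card V := by
  have := (isUniversal_cone_none (G := G)).maxDegree_add_one
  rw [Fintype.card_option] at this
  omega

theorem cliqueNum_cone [Finite V] : (cone G).cliqueNum = G.cliqueNum + 1 := by
  refine le_antisymm ?_ ?_
  · obtain ⟨t, ht⟩ := (cone G).exists_isNClique_cliqueNum
    have hclique : G.IsClique (t.eraseNone : Set V) := fun a ha b hb hab ↦
      ht.isClique (Finset.mem_eraseNone.1 ha) (Finset.mem_eraseNone.1 hb) (by simpa using hab)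
    have := Finset.pred_card_le_card_erase (s := t) (a := none)
    rw [← Finset.card_eraseNone_eq_card_erase, ht.card_eq] at this
    have := hclique.card_le_cliqueNum
    omega
  · obtain ⟨s, hs⟩ := G.exists_isNClique_cliqueNum
    refine IsNClique.le_cliqueNum (s := Finset.insertNone s) ⟨?_, by simp [hs.card_eq]⟩
    rintro (_ | a) ha (_ | b) hb hab
    · exact absurd rfl hab
    · trivial
    · trivial
    · simp only [Finset.mem_coe, Finset.some_mem_insertNone] at ha hb
      exact hs.isClique ha hb (by simpa using hab)

theorem colorable_cone_succ_iff {n : ℕ} : (cone G).Colorable (n + 1) ↔ G.Colorable n := by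
  constructor
  · rintro ⟨C⟩
    have C' : G.Coloring {c // c ≠ C none} :=
      Coloring.mk
        (fun v ↦ ⟨C (some v), C.valid (isUniversal_cone_none (Option.some_ne_none v).symm).symm⟩)
        fun hab e ↦ C.valid (G := cone G) (v := some _) (w := some _) hab (congrArg Subtype.val e)
    simpa [Fintype.card_subtype_compl] using C'.colorable
  · rintro ⟨C⟩
    have C' : (cone G).Coloring (Option (Fin n)) := Coloring.mk (Option.map C) <| by
      rintro (_ | a) (_ | b) hab
      · exact absurd hab ((cone G).loopless.irrefl _)
      · simp
      · simp
      · simpa using C.valid hab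
    simpa using C'.colorable

theorem chromaticNumber_cone {n : ℕ} (h : G.chromaticNumber = n + 1) :
    (cone G).chromaticNumber = n + 2 := by
  rw [chromaticNumber_eq_iff_colorable_not_colorable] at h
  rwa [show (n : ℕ∞) + 2 = ((n + 1 : ℕ) : ℕ∞) + 1 by push_cast; ring,
    chromaticNumber_eq_iff_colorable_not_colorable, colorable_cone_succ_iff,
    colorable_cone_succ_iff]

theorem isContained_of_embedding_cone (f : H ↪g cone G) (hf : ∀ u, f u ≠ none) : H ⊑ G := by
  choose g hg using fun u ↦ Option.ne_none_iff_exists'.1 (hf u)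
  refine ⟨⟨⟨g, fun {u v} huv ↦ ?_⟩, fun u v e ↦ f.injective ?_⟩⟩
  · simpa [hg] using f.map_adj_iff.2 huv
  · rw [hg, hg]
    exact congrArg some e

theorem exists_isIndepSet_of_embedding_cone [Fintype U] (f : H ↪g cone G) {h : U}
    (hh : f h = none) (hind : ∀ u v, u ≠ h → v ≠ h → ¬H.Adj u v) :
    ∃ s : Finset V, G.IsIndepSet s ∧ s.card + 1 = Fintype.card U := by
  refine ⟨(Finset.univ.map f.toEmbedding).eraseNone, ?_, ?_⟩
  · intro a ha b hb _ hadj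
    simp only [Finset.coe_eraseNone, Set.mem_preimage, Finset.coe_map, Finset.coe_univ,
      Set.image_univ, Set.mem_range] at ha hb
    obtain ⟨u, hu : f u = some a⟩ := ha
    obtain ⟨v, hv : f v = some b⟩ := hb
    have hne : ∀ {w a}, f w = some a → w ≠ h := fun hw e ↦ by simp [e, hh] at hw
    have : (cone G).Adj (f u) (f v) := by rw [hu, hv]; exact hadj
    exact hind u v (hne hu) (hne hv) (f.map_adj_iff.1 this)
  · have hnone : none ∈ Finset.univ.map f.toEmbedding :=
      Finset.mem_map.2 ⟨h, Finset.mem_univ _, hh⟩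
    rw [Finset.card_eraseNone_of_mem hnone, Finset.card_map, Finset.card_univ]
    have : 0 < Fintype.card U := Fintype.card_pos_iff.2 ⟨h⟩
    omega

end Cone

section Wheel

variable {r : ℕ} [Fintype U] {H : SimpleGraph U} [DecidableRel H.Adj]

theorem cliqueNum_wheel (hr : 1 ≤ r) : (cone (cycleGraph (2 * r + 3))).cliqueNum = 3 := by
  rw [cliqueNum_cone, cliqueNum_cycleGraph (by omega)]

theorem chromaticNumber_wheel : (cone (cycleGraph (2 * r + 3))).chromaticNumber = 4 := by
  have := chromaticNumber_cone (n := 2) (G := cycleGraph (2 * r + 3))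
    (by rw [chromaticNumber_cycleGraph_of_odd _ (by omega) (by simp [parity_simps])]; norm_num)
  rw [this]; norm_num

-- Induced subgraphs of the wheel, also nested ones, are handled as graph embeddings `H ↪g W`,
-- which in Mathlib preserve adjacency in both directions.
theorem maxDegree_add_one_le_cliqueNum_add_of_embedding_wheel (hr : 1 ≤ r) [Nonempty U]
    (f : H ↪g cone (cycleGraph (2 * r + 3))) (hf : ¬Function.Surjective f) :
    H.maxDegree + 1 ≤ H.cliqueNum + 2 * r := by
  have hω : 1 ≤ H.cliqueNum :=
    (isNClique_singleton.2 rfl : H.IsNClique 1 {Classical.arbitrary U}).le_cliqueNum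
  by_cases hhub : ∃ h, f h = none
  · obtain ⟨h, hh⟩ := hhub
    have hdom : H.IsUniversal h := IsUniversal.comap f (hh ▸ isUniversal_cone_none)
    have hΔ := hdom.maxDegree_add_one
    have hcard := Fintype.card_lt_of_injective_not_surjective f f.injective hf
    simp only [Fintype.card_option, Fintype.card_fin] at hcard
    by_cases htri : ∃ u v, u ≠ h ∧ v ≠ h ∧ H.Adj u v
    · obtain ⟨u, v, hu, hv, huv⟩ := htri
      have := (is3Clique_triple_iff.2 ⟨hdom hu.symm, hdom hv.symm, huv⟩).le_cliqueNum
      omega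
    · push Not at htri
      obtain ⟨s, hs, hcard'⟩ := exists_isIndepSet_of_embedding_cone f hh htri
      have := two_mul_card_le_of_isIndepSet_cycleGraph (by omega) hs
      omega
  · push Not at hhub
    have := (isContained_of_embedding_cone f hhub).maxDegree_mono.trans (maxDegree_cycleGraph_le _)
    omega

theorem maxDegree_add_one_le_chromaticNumber_add_of_embedding_wheel (hr : 1 ≤ r) [Nonempty U]
    (f : H ↪g cone (cycleGraph (2 * r + 3))) :
    (H.maxDegree + 1 : ℕ∞) ≤ H.chromaticNumber + (2 * r : ℕ) := by
  by_cases hf : Function.Surjective f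
  · let e : H ≃g cone (cycleGraph (2 * r + 3)) := RelIso.ofSurjective f hf
    rw [chromaticNumber_congr e, chromaticNumber_wheel, e.maxDegree_eq, maxDegree_cone,
      Fintype.card_fin]
    norm_cast
    omega
  · calc (H.maxDegree + 1 : ℕ∞)
        ≤ ((H.cliqueNum + 2 * r : ℕ) : ℕ∞) := by
          exact_mod_cast maxDegree_add_one_le_cliqueNum_add_of_embedding_wheel hr f hf
      _ ≤ H.chromaticNumber + (2 * r : ℕ) := by
          push_cast
          gcongr
          exact cliqueNum_le_chromaticNumber

end Wheel

end SimpleGraph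

open SimpleGraph in
theorem oddWheel_minForbOmega_not_minForbUpsilon (r : ℕ) (hr : 1 ≤ r) :
    MinForbOmega (2 * r) (cone (cycleGraph (2 * r + 3))) ∧
      ¬ MinForbUpsilon (2 * r) (cone (cycleGraph (2 * r + 3))) ∧
      (cone (cycleGraph (2 * r + 3))).maxDegree = 2 * r + 3 ∧
      (cone (cycleGraph (2 * r + 3))).cliqueNum + 2 * r = 2 * r + 3 ∧
      (cone (cycleGraph (2 * r + 3))).chromaticNumber = 4 := by
  set W := cone (cycleGraph (2 * r + 3))
  have hΔ : W.maxDegree = 2 * r + 3 := by rw [maxDegree_cone, Fintype.card_fin]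
  refine ⟨⟨not_omegaMem_of_cliqueNum_add_lt (by rw [hΔ, cliqueNum_wheel hr]; omega),
    fun s hs t ⟨x, hx⟩ ↦ ?_⟩, fun hW ↦ hW.1 fun s ⟨x, hx⟩ ↦ ?_, hΔ,
    by rw [cliqueNum_wheel hr]; ring, chromaticNumber_wheel⟩
  · have : Nonempty (t : Set _) := ⟨⟨x, hx⟩⟩
    obtain ⟨y, hy⟩ : ∃ y, y ∉ s := by simpa [Finset.eq_univ_iff_forall] using hs
    refine maxDegree_add_one_le_cliqueNum_add_of_embedding_wheel hr
      ((Embedding.induce _).trans (Embedding.induce _)) fun hsurj ↦ ?_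
    obtain ⟨z, hz⟩ := hsurj y
    exact hy (hz ▸ z.1.2)
  · have : Nonempty (s : Set _) := ⟨⟨x, hx⟩⟩
    exact maxDegree_add_one_le_chromaticNumber_add_of_embedding_wheel hr (Embedding.induce _)
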